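/- arXiv:0812.3619 — 3 statements merged into one kernel-verified Lean document; each statement's English description precedes it below -/
import Mathlib

section
/- Let I : ℝ^{d+1} → [0,∞] be convex, f(v,s) = s·I(v/s,1/s), and J(v) = inf_{0<s≤1} f(v,s). Suppose v₀, s₀ are such that J(v₀) = f(v₀,s₀), f is continuously differentiable in a neighborhood of (v₀,s₀), and ∂f/∂s(v₀,s₀) = 0. Then J is differentiable at v₀ in each coordinate direction with ∂J/∂v_i(v₀) = ∂f/∂v_i(v₀,s₀) = ∂I/∂x_i(v₀/s₀, 1/s₀). -/
/-!
The function `f` is the perspective `(w, s) ↦ s · I(w / s)` of `I` composed with the affine map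
`(v, s) ↦ ((v, 1), s)`, so it is convex on `s > 0` and differentiable wherever `I` is, with
`∂f/∂v (v, s) = ∂I/∂x (v / s, 1 / s)`. By convexity `f` lies above its tangent hyperplane at
`(v₀, s₀)`, and since `∂f/∂s (v₀, s₀) = 0` this gives `J v ≥ J v₀ + ∂f/∂v (v₀, s₀) (v - v₀)`.
On the other hand `J v ≤ f (v, s₀)`. Thus `J` is squeezed between two functions that touch at
`v₀` with the same derivative there.
-/

open Set Topology

section Calculus

variable {E : Type*} [NormedAddCommGroup E] [NormedSpace ℝ E]

theorem HasFDerivAt.of_affine_le_of_le {φ ψ : E → ℝ} {L : E →L[ℝ] ℝ} {x : E}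
    (hψ : HasFDerivAt ψ L x) (hx : φ x = ψ x) (hlow : ∀ᶠ y in 𝓝 x, φ x + L (y - x) ≤ φ y)
    (hup : ∀ᶠ y in 𝓝 x, φ y ≤ ψ y) : HasFDerivAt φ L x := by
  refine .of_isLittleO <| Asymptotics.IsBigO.trans_isLittleO ?_ hψ.isLittleO
  refine .of_bound 1 ?_
  filter_upwards [hlow, hup] with y hl hu
  simp only [Real.norm_eq_abs, one_mul]
  exact abs_le_abs (by linarith) (by linarith)

theorem ConvexOn.add_apply_sub_le_of_hasFDerivAt {s : Set E} {f : E → ℝ} {f' : E →L[ℝ] ℝ}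
    {x y : E} (hf : ConvexOn ℝ s f) (hx : x ∈ s) (hy : y ∈ s) (hf' : HasFDerivAt f f' x) :
    f x + f' (y - x) ≤ f y := by
  let g : ℝ →ᵃ[ℝ] E := AffineMap.lineMap x y
  have hmaps : MapsTo g (Icc 0 1) s := by
    simpa only [g, mapsTo_iff_image_subset, ← segment_eq_image_lineMap]
      using hf.1.segment_subset hx hy
  have hconv : ConvexOn ℝ (Icc 0 1) (f ∘ g) :=
    (hf.comp_affineMap g).subset hmaps (convex_Icc 0 1)
  have hderiv : HasDerivAt (f ∘ g) (f' (y - x)) 0 :=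
    hf'.comp_hasDerivAt_of_eq 0 AffineMap.hasDerivAt_lineMap
      (AffineMap.lineMap_apply_zero x y).symm
  have hslope := hconv.le_slope_of_hasDerivAt (by simp) (by simp) zero_lt_one hderiv
  simp only [slope, sub_zero, inv_one, Function.comp_apply, AffineMap.lineMap_apply_zero,
    AffineMap.lineMap_apply_one, g, one_smul, vsub_eq_sub] at hslope
  linarith

theorem ConvexOn.hasFDerivAt_iInf_of_fderiv_snd_eq_zero {f : E × ℝ → ℝ} {C : Set (E × ℝ)}
    {T : Set ℝ} {J : E → ℝ} {L : E × ℝ →L[ℝ] ℝ} {v₀ : E} {s₀ : ℝ}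
    (hf : ConvexOn ℝ C f) (hTC : ∀ v, ∀ s ∈ T, (v, s) ∈ C)
    (hJ : ∀ v, J v = ⨅ s : T, f (v, s)) (hs₀ : s₀ ∈ T) (hmin : J v₀ = f (v₀, s₀))
    (hL : HasFDerivAt f L (v₀, s₀)) (hLs : L (0, 1) = 0) :
    HasFDerivAt J (L.comp (.inl ℝ E ℝ)) v₀ := by
  have : Nonempty T := ⟨⟨s₀, hs₀⟩⟩
  have hlow : ∀ v, ∀ s ∈ T, J v₀ + L (v - v₀, 0) ≤ f (v, s) := by
    intro v s hs
    have hsplit : (v, s) - (v₀, s₀) = (v - v₀, 0) + (s - s₀) • ((0 : E), (1 : ℝ)) := by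
      ext <;> simp
    have := hf.add_apply_sub_le_of_hasFDerivAt (hTC v₀ s₀ hs₀) (hTC v s hs) hL
    rwa [hsplit, map_add, map_smul, hLs, smul_zero, add_zero, ← hmin] at this
  have hbdd : ∀ v, BddBelow (range fun s : T => f (v, s)) := fun v =>
    ⟨_, forall_mem_range.2 fun s => hlow v s s.2⟩
  have hsection : HasFDerivAt (fun v => f (v, s₀)) (L.comp (.inl ℝ E ℝ)) v₀ :=
    hL.comp v₀ (hasFDerivAt_prodMk_left v₀ s₀)
  refine hsection.of_affine_le_of_le hmin (.of_forall fun v => ?_) (.of_forall fun v => ?_)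
  · rw [hJ v]
    exact le_ciInf fun s => hlow v s s.2
  · rw [hJ v]
    exact ciInf_le (hbdd v) ⟨s₀, hs₀⟩

end Calculus

section Perspective

variable {E : Type*}

noncomputable def perspective [SMul ℝ E] (g : E → ℝ) (p : E × ℝ) : ℝ := p.2 * g (p.2⁻¹ • p.1)

theorem ConvexOn.perspective [AddCommGroup E] [Module ℝ E] {g : E → ℝ}
    (hg : ConvexOn ℝ univ g) : ConvexOn ℝ {p : E × ℝ | 0 < p.2} (perspective g) := by
  refine ⟨convex_halfSpace_gt (LinearMap.snd ℝ E ℝ).isLinear 0, ?_⟩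
  rintro ⟨x, s⟩ (hs : 0 < s) ⟨y, t⟩ (ht : 0 < t) a b ha hb hab
  have hS : 0 < a * s + b * t := by
    nlinarith [mul_pos hs ht, mul_nonneg (mul_nonneg ha hs.le) hs.le,
      mul_nonneg (mul_nonneg hb ht.le) ht.le]
  set S := a * s + b * t
  have hwsum : a * s / S + b * t / S = 1 := by rw [← add_div, div_self hS.ne']
  have hcomb : S⁻¹ • (a • x + b • y) = (a * s / S) • (s⁻¹ • x) + (b * t / S) • (t⁻¹ • y) := by
    simp only [smul_add, smul_smul]
    congr 2 <;> field_simp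
  have hconv := hg.2 (mem_univ (s⁻¹ • x)) (mem_univ (t⁻¹ • y)) (by positivity) (by positivity)
    hwsum
  rw [smul_eq_mul, smul_eq_mul] at hconv
  simp only [_root_.perspective, Prod.smul_mk, Prod.mk_add_mk, smul_eq_mul]
  rw [hcomb]
  calc S * g ((a * s / S) • (s⁻¹ • x) + (b * t / S) • (t⁻¹ • y))
      ≤ S * (a * s / S * g (s⁻¹ • x) + b * t / S * g (t⁻¹ • y)) := by gcongr
    _ = a * (s * g (s⁻¹ • x)) + b * (t * g (t⁻¹ • y)) := by field_simp

variable [NormedAddCommGroup E] [NormedSpace ℝ E]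

theorem HasFDerivAt.perspective {g : E → ℝ} {g' : E →L[ℝ] ℝ} {w : E} {s : ℝ} (hs : s ≠ 0)
    (hg : HasFDerivAt g g' (s⁻¹ • w)) :
    HasFDerivAt (perspective g)
      (g'.comp (.fst ℝ E ℝ) + (g (s⁻¹ • w) - g' (s⁻¹ • w)) • .snd ℝ E ℝ) (w, s) := by
  have hinv : HasFDerivAt (fun p : E × ℝ => p.2⁻¹) _ (w, s) :=
    (hasDerivAt_inv hs).comp_hasFDerivAt (w, s) (hasFDerivAt_snd (𝕜 := ℝ) (p := (w, s)))
  refine HasFDerivAt.congr_fderiv (f := _root_.perspective g)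
    (hasFDerivAt_snd.mul (hg.comp (w, s) (hinv.smul hasFDerivAt_fst))) ?_
  ext u
  · simp [hs]
  · simp [hs, pow_two, ← mul_assoc, sub_eq_neg_add]

end Perspective

section Homogenize

variable {E : Type*} [NormedAddCommGroup E] [NormedSpace ℝ E]

def homogenize : E × ℝ →ᴬ[ℝ] (E × ℝ) × ℝ where
  toFun p := ((p.1, 1), p.2)
  linear := ((LinearMap.inl ℝ E ℝ).comp (LinearMap.fst ℝ E ℝ)).prod (LinearMap.snd ℝ E ℝ)
  map_vadd' p v := by simp [add_comm]
  cont := by fun_prop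

variable {I f : E × ℝ → ℝ}

theorem eq_perspective_homogenize (hf : ∀ v s, s ≠ 0 → f (v, s) = s * I (s⁻¹ • v, s⁻¹))
    {p : E × ℝ} (hp : p.2 ≠ 0) : f p = perspective I (homogenize p) := by
  simp [homogenize, perspective, hf p.1 p.2 hp]

theorem convexOn_of_eq_perspective (hf : ∀ v s, s ≠ 0 → f (v, s) = s * I (s⁻¹ • v, s⁻¹))
    (hI : ConvexOn ℝ univ I) : ConvexOn ℝ {p : E × ℝ | 0 < p.2} f :=
  (hI.perspective.comp_affineMap homogenize.toAffineMap).congr fun _ hp =>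
    (eq_perspective_homogenize hf (ne_of_gt hp)).symm

theorem hasFDerivAt_of_eq_perspective (hf : ∀ v s, s ≠ 0 → f (v, s) = s * I (s⁻¹ • v, s⁻¹))
    {I' : E × ℝ →L[ℝ] ℝ} {v : E} {s : ℝ} (hs : s ≠ 0) (hI : HasFDerivAt I I' (s⁻¹ • v, s⁻¹)) :
    HasFDerivAt f ((I'.comp (.inl ℝ E ℝ)).comp (.fst ℝ E ℝ) +
      (I (s⁻¹ • v, s⁻¹) - I' (s⁻¹ • v, s⁻¹)) • .snd ℝ E ℝ) (v, s) := by
  have hP := (HasFDerivAt.perspective (w := ((v, 1) : E × ℝ)) hs (by simpa using hI)).comp (v, s)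
    (homogenize (E := E)).hasFDerivAt
  refine (hP.congr_of_eventuallyEq ?_).congr_fderiv ?_
  · filter_upwards [continuous_snd.isOpen_preimage _ isOpen_ne |>.mem_nhds hs] with p hp
    exact eq_perspective_homogenize hf hp
  · ext u <;> simp [homogenize]

end Homogenize

theorem stmt_5_general {d : ℕ}
    (I f : EuclideanSpace ℝ (Fin d) × ℝ → ℝ)
    (J : EuclideanSpace ℝ (Fin d) → ℝ)
    (hIconv : ConvexOn ℝ Set.univ I)
    (hf : ∀ (v : EuclideanSpace ℝ (Fin d)) (s : ℝ), s ≠ 0 → f (v, s) = s * I (s⁻¹ • v, s⁻¹))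
    (hJ : ∀ v, J v = ⨅ s : Set.Ioc (0:ℝ) 1, f (v, (s : ℝ)))
    (v₀ : EuclideanSpace ℝ (Fin d)) (s₀ : ℝ) (hs₀ : s₀ ∈ Set.Ioc (0:ℝ) 1)
    (hmin : J v₀ = f (v₀, s₀))
    (hIC1 : ContDiffAt ℝ 1 I (s₀⁻¹ • v₀, s₀⁻¹))
    (hds : fderiv ℝ f (v₀, s₀) ((0 : EuclideanSpace ℝ (Fin d)), (1 : ℝ)) = 0) :
    ∀ i : Fin d,
      HasDerivAt (fun h : ℝ => J (v₀ + h • EuclideanSpace.single i 1))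
        (fderiv ℝ I (s₀⁻¹ • v₀, s₀⁻¹) (EuclideanSpace.single i 1, (0 : ℝ))) 0 ∧
      fderiv ℝ f (v₀, s₀) (EuclideanSpace.single i 1, (0 : ℝ))
        = fderiv ℝ I (s₀⁻¹ • v₀, s₀⁻¹) (EuclideanSpace.single i 1, (0 : ℝ)) := by
  intro i
  have hfd := hasFDerivAt_of_eq_perspective hf hs₀.1.ne'
    (hIC1.differentiableAt one_ne_zero).hasFDerivAt
  rw [hfd.fderiv] at hds ⊢
  have hJd := (convexOn_of_eq_perspective hf hIconv).hasFDerivAt_iInf_of_fderiv_snd_eq_zero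
    (fun _ _ hs => hs.1) hJ hs₀ hmin hfd hds
  have hline : HasDerivAt (fun h : ℝ => v₀ + h • EuclideanSpace.single i 1)
      (EuclideanSpace.single i 1) 0 := by
    simpa using ((hasDerivAt_id (0 : ℝ)).smul_const (EuclideanSpace.single i (1 : ℝ))).const_add v₀
  exact ⟨(hJd.comp_hasDerivAt_of_eq 0 hline (by simp)).congr_deriv (by simp), by simp⟩

/-- Let `I : ℝ^{d+1} → [0,∞)` be convex, `f(v,s) = s·I(v/s,1/s)`, and
`J(v) = inf_{0<s≤1} f(v,s)`. Suppose `v₀, s₀` are such that `J(v₀) = f(v₀,s₀)`, `f` is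
continuously differentiable in a neighborhood of `(v₀,s₀)`, and `∂f/∂s(v₀,s₀) = 0`. Then `J` is
differentiable at `v₀` in each coordinate direction with
`∂J/∂v_i(v₀) = ∂f/∂v_i(v₀,s₀) = ∂I/∂x_i(v₀/s₀, 1/s₀)`. -/
theorem stmt_5 {d : ℕ}
    (I f : EuclideanSpace ℝ (Fin d) × ℝ → ℝ)
    (J : EuclideanSpace ℝ (Fin d) → ℝ)
    (hIconv : ConvexOn ℝ Set.univ I) (hInonneg : ∀ p, 0 ≤ I p)
    (hf : ∀ (v : EuclideanSpace ℝ (Fin d)) (s : ℝ), s ≠ 0 → f (v, s) = s * I (s⁻¹ • v, s⁻¹))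
    (hJ : ∀ v, J v = ⨅ s : Set.Ioc (0:ℝ) 1, f (v, (s : ℝ)))
    (v₀ : EuclideanSpace ℝ (Fin d)) (s₀ : ℝ) (hs₀ : s₀ ∈ Set.Ioc (0:ℝ) 1)
    (hmin : J v₀ = f (v₀, s₀))
    (hfC1 : ContDiffAt ℝ 1 f (v₀, s₀))
    (hIC1 : ContDiffAt ℝ 1 I (s₀⁻¹ • v₀, s₀⁻¹))
    (hds : fderiv ℝ f (v₀, s₀) ((0 : EuclideanSpace ℝ (Fin d)), (1 : ℝ)) = 0) :
    ∀ i : Fin d,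
      HasDerivAt (fun h : ℝ => J (v₀ + h • EuclideanSpace.single i 1))
        (fderiv ℝ I (s₀⁻¹ • v₀, s₀⁻¹) (EuclideanSpace.single i 1, (0 : ℝ))) 0 ∧
      fderiv ℝ f (v₀, s₀) (EuclideanSpace.single i 1, (0 : ℝ))
        = fderiv ℝ I (s₀⁻¹ • v₀, s₀⁻¹) (EuclideanSpace.single i 1, (0 : ℝ)) :=
  stmt_5_general I f J hIconv hf hJ v₀ s₀ hs₀ hmin hIC1 hds
end

section
/- Let Λ : ℝ^d × ℝ → (−∞,∞] be convex with Λ(η,λ) = +∞ for all λ > 0, and let I be its Legendre transform. Fix (η₀, 0) in the domain of Λ where Λ is differentiable, with ∇Λ(η₀,0) = (x, h). Then I(x,t) = I(x,h) = x·η₀ − Λ_X(η₀) for all t ≥ h, where Λ_X(η) := Λ(η,0). In particular t ↦ I(x,t) is constant on [h,∞) and equals I₁(x), the Legendre transform of Λ_X, provided I₁(x) ≤ inf_t I(x,t). -/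
/-! The expression `⟪η, x⟫ + λ t - Λ(η, λ)` is, by the subgradient inequality at
`(η₀, 0)`, at most `⟪η₀, x⟫ - Λ(η₀, 0) + λ (t - h)`. For `t ≥ h` and `λ ≤ 0` the last term is
nonpositive, so the supremum defining `I(x, t)` is attained at `(η₀, 0)`; restricting to `λ = 0`
shows in the same way that `(η₀, 0)` also attains the supremum defining `I₁(x)`. -/

theorem ConvexOn.add_le_of_hasFDerivWithinAt {E : Type*} [NormedAddCommGroup E]
    [NormedSpace ℝ E] {s : Set E} {f : E → ℝ} {f' : E →L[ℝ] ℝ} {a b : E} (hf : ConvexOn ℝ s f)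
    (hf' : HasFDerivWithinAt f f' s a) (ha : a ∈ s) (hb : b ∈ s) : f a + f' (b - a) ≤ f b := by
  let ℓ := AffineMap.lineMap (k := ℝ) a b
  have hderiv : HasDerivWithinAt (f ∘ ℓ) (f' (b - a)) (ℓ ⁻¹' s) 0 :=
    hf'.comp_hasDerivWithinAt_of_eq 0 AffineMap.hasDerivWithinAt_lineMap (fun _ h => h)
      (by simp [ℓ])
  have hslope := (hf.comp_affineMap ℓ).le_slope_of_hasDerivWithinAt
    (by simpa [ℓ]) (by simpa [ℓ]) one_pos hderiv
  simp only [slope, Function.comp_apply, ℓ, AffineMap.lineMap_apply_zero,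
    AffineMap.lineMap_apply_one, sub_zero, inv_one, one_smul, vsub_eq_sub] at hslope
  linarith

theorem ciSup_eq_of_forall_le_apply {ι α : Type*} [ConditionallyCompleteLattice α] {f : ι → α}
    (i₀ : ι) (h : ∀ i, f i ≤ f i₀) : ⨆ i, f i = f i₀ :=
  have : Nonempty ι := ⟨i₀⟩
  ciSup_eq_of_forall_le_of_forall_lt_exists_gt h fun _ hw => ⟨i₀, hw⟩

theorem stmt_13_general {d : ℕ}
    (Λ : EuclideanSpace ℝ (Fin d) → ℝ → ℝ)
    (hΛconv : ConvexOn ℝ {p : EuclideanSpace ℝ (Fin d) × ℝ | p.2 ≤ 0}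
      (fun p => Λ p.1 p.2))
    (η₀ x : EuclideanSpace ℝ (Fin d)) (h : ℝ)
    (L : (EuclideanSpace ℝ (Fin d) × ℝ) →L[ℝ] ℝ)
    (hL : ∀ p : EuclideanSpace ℝ (Fin d) × ℝ, L p = (inner ℝ x p.1 : ℝ) + h * p.2)
    (hder : HasFDerivWithinAt (fun p : EuclideanSpace ℝ (Fin d) × ℝ => Λ p.1 p.2) L
      {p : EuclideanSpace ℝ (Fin d) × ℝ | p.2 ≤ 0} (η₀, (0 : ℝ)))
    (I : EuclideanSpace ℝ (Fin d) × ℝ → ℝ)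
    (hI : ∀ (y : EuclideanSpace ℝ (Fin d)) (t : ℝ),
      I (y, t) = ⨆ p : EuclideanSpace ℝ (Fin d) × {l : ℝ // l ≤ 0},
        ((inner ℝ p.1 y : ℝ) + (p.2 : ℝ) * t - Λ p.1 (p.2 : ℝ)))
    (I₁ : EuclideanSpace ℝ (Fin d) → ℝ)
    (hI₁ : ∀ y, I₁ y = ⨆ η : EuclideanSpace ℝ (Fin d), ((inner ℝ η y : ℝ) - Λ η 0)) :
    ∀ t : ℝ, h ≤ t →
      I (x, t) = I (x, h) ∧
      I (x, t) = (inner ℝ η₀ x : ℝ) - Λ η₀ 0 ∧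
      I (x, t) = I₁ x := by
  have hsub (η : EuclideanSpace ℝ (Fin d)) (l : ℝ) (hl : l ≤ 0) :
      Λ η₀ 0 + (inner ℝ η x - inner ℝ η₀ x + h * l) ≤ Λ η l := by
    simpa [hL, inner_sub_right, real_inner_comm x] using
      hΛconv.add_le_of_hasFDerivWithinAt hder (by simp) (b := (η, l)) hl
  have hIx (t : ℝ) (ht : h ≤ t) : I (x, t) = inner ℝ η₀ x - Λ η₀ 0 := by
    rw [hI, ciSup_eq_of_forall_le_apply (η₀, ⟨0, le_rfl⟩) fun p => ?_]
    · simp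
    linarith [hsub p.1 p.2 p.2.2, mul_nonpos_of_nonpos_of_nonneg p.2.2 (sub_nonneg.2 ht)]
  have hI₁x : I₁ x = inner ℝ η₀ x - Λ η₀ 0 := by
    rw [hI₁, ciSup_eq_of_forall_le_apply η₀ fun η => ?_]
    linarith [hsub η 0 le_rfl]
  intro t ht
  exact ⟨(hIx t ht).trans (hIx h le_rfl).symm, hIx t ht, (hIx t ht).trans hI₁x.symm⟩

/-- Let `Λ : ℝ^d × ℝ → (−∞,∞]` be convex with `Λ(η,λ) = +∞` for all `λ > 0`
(encoded by restricting all data to the half-space `λ ≤ 0`), and let `I` be its Legendre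
transform, `I(x,t) = sup_{η, λ≤0} ((x,t)·(η,λ) − Λ(η,λ))`. Fix `(η₀,0)` in the domain of `Λ`
where `Λ` is differentiable (within the half-space), with `∇Λ(η₀,0) = (x,h)`. Then
`I(x,t) = I(x,h) = x·η₀ − Λ_X(η₀)` for all `t ≥ h`, where `Λ_X(η) = Λ(η,0)`; in particular
`t ↦ I(x,t)` is constant on `[h,∞)` and equals `I₁(x)`, the Legendre transform of `Λ_X`,
provided `I₁ ≤ inf_t I(·,t)`. -/
theorem stmt_13 {d : ℕ}
    (Λ : EuclideanSpace ℝ (Fin d) → ℝ → ℝ)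
    (hΛconv : ConvexOn ℝ {p : EuclideanSpace ℝ (Fin d) × ℝ | p.2 ≤ 0}
      (fun p => Λ p.1 p.2))
    (η₀ x : EuclideanSpace ℝ (Fin d)) (h : ℝ)
    (L : (EuclideanSpace ℝ (Fin d) × ℝ) →L[ℝ] ℝ)
    (hL : ∀ p : EuclideanSpace ℝ (Fin d) × ℝ, L p = (inner ℝ x p.1 : ℝ) + h * p.2)
    (hder : HasFDerivWithinAt (fun p : EuclideanSpace ℝ (Fin d) × ℝ => Λ p.1 p.2) L
      {p : EuclideanSpace ℝ (Fin d) × ℝ | p.2 ≤ 0} (η₀, (0 : ℝ)))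
    (I : EuclideanSpace ℝ (Fin d) × ℝ → ℝ)
    (hI : ∀ (y : EuclideanSpace ℝ (Fin d)) (t : ℝ),
      I (y, t) = ⨆ p : EuclideanSpace ℝ (Fin d) × {l : ℝ // l ≤ 0},
        ((inner ℝ p.1 y : ℝ) + (p.2 : ℝ) * t - Λ p.1 (p.2 : ℝ)))
    (I₁ : EuclideanSpace ℝ (Fin d) → ℝ)
    (hI₁ : ∀ y, I₁ y = ⨆ η : EuclideanSpace ℝ (Fin d), ((inner ℝ η y : ℝ) - Λ η 0))
    (hI₁le : ∀ (y : EuclideanSpace ℝ (Fin d)) (t : ℝ), I₁ y ≤ I (y, t)) :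
    ∀ t : ℝ, h ≤ t →
      I (x, t) = I (x, h) ∧
      I (x, t) = (inner ℝ η₀ x : ℝ) - Λ η₀ 0 ∧
      I (x, t) = I₁ x :=
  stmt_13_general Λ hΛconv η₀ x h L hL hder I hI I₁ hI₁
end

section
/- Let Λ : ℝ^{d+1} → ℝ be strictly convex and real-analytic on an open set, and suppose λ : C → ℝ (C ⊆ ℝ^d open) satisfies Λ(η, λ(η)) = 0 on C. Then λ is strictly concave on C, and consequently the map η ↦ −∇λ(η) is injective on C. -/
/-!
Let `z = a x + b y` and `s = a λ(x) + b λ(y)`. Strict convexity of `Λ` gives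
`Λ(z, s) < 0 = Λ(z, λ(z))`. On the vertical line through `z`, `t ↦ Λ(z, t)` is convex with
nonnegative derivative at `λ(z)`, hence nondecreasing to the right of `λ(z)`; so `s < λ(z)`,
which is strict concavity of `λ`. For a strictly concave differentiable function the tangent
planes at two distinct points lie strictly above the graph; adding the two tangent inequalities
shows that the derivatives (hence the gradients) at distinct points differ.
-/

open Set

lemma ConvexOn.apply_le_apply_of_hasDerivAt_nonneg {S : Set ℝ} {φ : ℝ → ℝ} {φ' x y : ℝ}
    (hφ : ConvexOn ℝ S φ) (hx : x ∈ S) (hy : y ∈ S) (hxy : x ≤ y)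
    (hd : HasDerivAt φ φ' x) (hφ' : 0 ≤ φ') : φ x ≤ φ y := by
  rcases hxy.eq_or_lt with rfl | hlt
  · rfl
  have hslope := hφ.le_slope_of_hasDerivAt hx hy hlt hd
  rw [slope_def_field] at hslope
  have := (le_div_iff₀ (sub_pos.2 hlt)).1 (hφ'.trans hslope)
  linarith

section ImplicitFunction

variable {E : Type*} [AddCommGroup E] [Module ℝ E]

lemma ConvexOn.comp_prodMk_left {V : Set (E × ℝ)} {Λ : E × ℝ → ℝ} (hΛ : ConvexOn ℝ V Λ)
    (z : E) : ConvexOn ℝ {t | (z, t) ∈ V} (fun t => Λ (z, t)) :=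
  hΛ.comp_affineMap ((AffineMap.const ℝ ℝ z).prod (AffineMap.id ℝ ℝ))

theorem StrictConvexOn.strictConcaveOn_of_apply_graph_eq_zero {V : Set (E × ℝ)}
    {Λ : E × ℝ → ℝ} {C : Set E} {f Λ' : E → ℝ} (hΛ : StrictConvexOn ℝ V Λ) (hC : Convex ℝ C)
    (hgraph : ∀ η ∈ C, (η, f η) ∈ V) (hzero : ∀ η ∈ C, Λ (η, f η) = 0)
    (hderiv : ∀ η ∈ C, HasDerivAt (fun t => Λ (η, t)) (Λ' η) (f η))
    (hΛ' : ∀ η ∈ C, 0 ≤ Λ' η) : StrictConcaveOn ℝ C f := by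
  refine ⟨hC, fun x hx y hy hxy a b ha hb hab => ?_⟩
  set z := a • x + b • y
  have hz : z ∈ C := hC hx hy ha.le hb.le hab
  have hcombo : a • (x, f x) + b • (y, f y) = (z, a • f x + b • f y) := by
    simp [z]
  have hsV : (z, a • f x + b • f y) ∈ V := by
    rw [← hcombo]; exact hΛ.1 (hgraph x hx) (hgraph y hy) ha.le hb.le hab
  have hneg : Λ (z, a • f x + b • f y) < 0 := by
    have := hΛ.2 (hgraph x hx) (hgraph y hy) (fun h => hxy (congrArg Prod.fst h)) ha hb hab
    rwa [hcombo, hzero x hx, hzero y hy, smul_zero, smul_zero, add_zero] at this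
  by_contra! hle
  have := (hΛ.convexOn.comp_prodMk_left z).apply_le_apply_of_hasDerivAt_nonneg (hgraph z hz)
    hsV hle (hderiv z hz) (hΛ' z hz)
  simp only [hzero z hz] at this
  exact this.not_gt hneg

end ImplicitFunction

section TangentInequality

variable {E : Type*} [NormedAddCommGroup E] [NormedSpace ℝ E] {s : Set E} {f : E → ℝ}
  {f' : E →L[ℝ] ℝ} {x y : E}

lemma ConcaveOn.le_add_fderiv (hf : ConcaveOn ℝ s f) (hx : x ∈ s) (hy : y ∈ s)
    (hd : HasFDerivAt f f' x) : f y ≤ f x + f' (y - x) := by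
  set g : ℝ →ᵃ[ℝ] E := AffineMap.lineMap x y
  have hg : ConcaveOn ℝ (g ⁻¹' s) (f ∘ g) := hf.comp_affineMap g
  have hgs : ∀ t ∈ Icc (0 : ℝ) 1, g t ∈ s := fun t ht => hf.1.lineMap_mem hx hy ht
  have hgd : HasDerivAt (f ∘ g) (f' (y - x)) 0 := by
    have hline : HasDerivAt (⇑g) (y - x) 0 := AffineMap.hasDerivAt_lineMap
    have hd0 : HasFDerivAt f f' (g 0) := by simpa [g] using hd
    exact hd0.comp_hasDerivAt 0 hline
  have := hg.slope_le_of_hasDerivAt (hgs 0 (left_mem_Icc.2 zero_le_one))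
    (hgs 1 (right_mem_Icc.2 zero_le_one)) zero_lt_one hgd
  simp only [slope_def_field, Function.comp_apply, AffineMap.lineMap_apply_one,
    AffineMap.lineMap_apply_zero, sub_zero, div_one, g] at this
  linarith

lemma StrictConcaveOn.lt_add_fderiv (hf : StrictConcaveOn ℝ s f) (hx : x ∈ s) (hy : y ∈ s)
    (hxy : x ≠ y) (hd : HasFDerivAt f f' x) : f y < f x + f' (y - x) := by
  -- compare the tangent inequality at the midpoint with strict concavity there
  have hmid := hf.2 hx hy hxy (by norm_num : (0 : ℝ) < 1 / 2) (by norm_num : (0 : ℝ) < 1 / 2)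
    (by norm_num)
  have htan := hf.concaveOn.le_add_fderiv hx (hf.1 hx hy (by norm_num) (by norm_num)
    (by norm_num : (1 / 2 : ℝ) + 1 / 2 = 1)) hd
  have hsub : ((1 / 2 : ℝ) • x + (1 / 2 : ℝ) • y) - x = (1 / 2 : ℝ) • (y - x) := by module
  rw [hsub, map_smul, smul_eq_mul] at htan
  simp only [smul_eq_mul] at hmid
  linarith

lemma StrictConcaveOn.injOn_fderiv (hf : StrictConcaveOn ℝ s f)
    (hd : ∀ x ∈ s, DifferentiableAt ℝ f x) : InjOn (fderiv ℝ f) s := by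
  intro x hx y hy hxy
  by_contra hne
  have h₁ := hf.lt_add_fderiv hx hy hne (hd x hx).hasFDerivAt
  have h₂ := hf.lt_add_fderiv hy hx (Ne.symm hne) (hd y hy).hasFDerivAt
  rw [← hxy, ← neg_sub, map_neg] at h₂
  linarith

end TangentInequality

lemma StrictConcaveOn.injOn_gradient {F : Type*} [NormedAddCommGroup F] [InnerProductSpace ℝ F]
    [CompleteSpace F] {s : Set F} {f : F → ℝ} (hf : StrictConcaveOn ℝ s f)
    (hd : ∀ x ∈ s, DifferentiableAt ℝ f x) : InjOn (gradient f) s :=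
  (InnerProductSpace.toDual ℝ F).symm.injective.comp_injOn (hf.injOn_fderiv hd)

theorem stmt_19_general {d : ℕ}
    (Λ : EuclideanSpace ℝ (Fin d) × ℝ → ℝ)
    (V : Set (EuclideanSpace ℝ (Fin d) × ℝ)) (hV : IsOpen V)
    (hΛstrict : StrictConvexOn ℝ V Λ) (hΛdiff : DifferentiableOn ℝ Λ V)
    (hΛlam : ∀ p ∈ V, 0 < fderiv ℝ Λ p ((0 : EuclideanSpace ℝ (Fin d)), (1 : ℝ)))
    (C : Set (EuclideanSpace ℝ (Fin d))) (hCconv : Convex ℝ C)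
    (lf : EuclideanSpace ℝ (Fin d) → ℝ)
    (hgraph : ∀ η ∈ C, (η, lf η) ∈ V)
    (hzero : ∀ η ∈ C, Λ (η, lf η) = 0)
    (hlfdiff : ∀ η ∈ C, DifferentiableAt ℝ lf η) :
    StrictConcaveOn ℝ C lf ∧
    Set.InjOn (fun η => -gradient lf η) C := by
  have hpartial : ∀ η ∈ C, HasDerivAt (fun t => Λ (η, t))
      (fderiv ℝ Λ (η, lf η) ((0 : EuclideanSpace ℝ (Fin d)), (1 : ℝ))) (lf η) := fun η hη =>
    (hΛdiff.differentiableAt (hV.mem_nhds (hgraph η hη))).hasFDerivAt.comp_hasDerivAt _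
      ((hasDerivAt_const _ η).prodMk (hasDerivAt_id _))
  have hconc : StrictConcaveOn ℝ C lf :=
    hΛstrict.strictConcaveOn_of_apply_graph_eq_zero hCconv hgraph hzero hpartial
      fun η hη => (hΛlam _ (hgraph η hη)).le
  exact ⟨hconc, neg_injective.comp_injOn (hconc.injOn_gradient hlfdiff)⟩

/-- Let `Λ : ℝ^{d+1} → ℝ` be strictly convex and differentiable on an open
convex set `V` containing the graph of `λ : C → ℝ` (`C ⊆ ℝ^d` open and convex), with
`∂Λ/∂λ > 0` on `V`, and suppose `Λ(η, λ(η)) = 0` on `C`. Then `λ` is strictly concave on `C`,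
and consequently the map `η ↦ −∇λ(η)` is injective on `C`. -/
theorem stmt_19 {d : ℕ}
    (Λ : EuclideanSpace ℝ (Fin d) × ℝ → ℝ)
    (V : Set (EuclideanSpace ℝ (Fin d) × ℝ)) (hV : IsOpen V) (hVconv : Convex ℝ V)
    (hΛstrict : StrictConvexOn ℝ V Λ) (hΛdiff : DifferentiableOn ℝ Λ V)
    (hΛanal : AnalyticOn ℝ Λ V)
    (hΛlam : ∀ p ∈ V, 0 < fderiv ℝ Λ p ((0 : EuclideanSpace ℝ (Fin d)), (1 : ℝ)))
    (C : Set (EuclideanSpace ℝ (Fin d))) (hC : IsOpen C) (hCconv : Convex ℝ C)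
    (lf : EuclideanSpace ℝ (Fin d) → ℝ)
    (hgraph : ∀ η ∈ C, (η, lf η) ∈ V)
    (hzero : ∀ η ∈ C, Λ (η, lf η) = 0)
    (hlfdiff : ∀ η ∈ C, DifferentiableAt ℝ lf η) :
    StrictConcaveOn ℝ C lf ∧
    Set.InjOn (fun η => -gradient lf η) C :=
  stmt_19_general Λ V hV hΛstrict hΛdiff hΛlam C hCconv lf hgraph hzero hlfdiff
end
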